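/- For every layered Gaussian relay network with L relay layers and N relays per layer, the approximate capacity satisfies C̄ ≤ C̃ + (2 + 2N(L−1))·log₂(N), where C̃ = min over all cuts Y = (y₁,…,y_L) of Σ_{l=0}^{L} min(|y_l|, |y_{l+1}^c|) · max_{i ∈ y_l, j ∈ y_{l+1}^c} R⁽ˡ⁾_{ij}, with the conventions y₀ = {S}, y_{L+1}^c = {D}, R⁽⁰⁾_{Sj} = log₂(1+|h⁽⁰⁾_j|²), R⁽ˡ⁾_{ij} = log₂(1+|H⁽ˡ⁾_{j,i}|²) for 1 ≤ l ≤ L−1, R⁽ᴸ⁾_{iD} = log₂(1+|h⁽ᴸ⁾_i|²), and a term is 0 whenever y_l or y_{l+1}^c is empty. -/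

import Mathlib

open scoped BigOperators

set_option maxHeartbeats 400000

/-- Capacity of a Gaussian MIMO channel with channel matrix `G` and independent
unit-power inputs: `log₂ det(I + G Gᴴ)`. -/
noncomputable def mimoCap {n m : Type*} [Fintype n] [Fintype m] [DecidableEq n]
    (G : Matrix n m ℂ) : ℝ :=
  Real.logb 2 (Matrix.det (1 + G * G.conjTranspose)).re

/-- Value of the cut `Y = (y 0, …, y (L-1))` in a layered Gaussian relay network with
`L` relay layers of `N` relays each, source-side gains `h0`, middle matrices
`Hm 1, …, Hm (L-1)` (entry `(j,i)` is the gain from relay `(l,i)` to relay `(l+1,j)`),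
and destination-side gains `hLv`. -/
noncomputable def cutValue (L N : ℕ) (h0 : Fin N → ℂ)
    (Hm : ℕ → Matrix (Fin N) (Fin N) ℂ) (hLv : Fin N → ℂ)
    (y : ℕ → Finset (Fin N)) : ℝ :=
  mimoCap (Matrix.of (fun (j : {x : Fin N // x ∈ (y 0)ᶜ}) (_ : Fin 1) => h0 j.1))
    + ∑ k ∈ Finset.range (L - 1),
        mimoCap ((Hm (k + 1)).submatrix
          (fun j : {x : Fin N // x ∈ (y (k + 1))ᶜ} => (j : Fin N))
          (fun i : {x : Fin N // x ∈ y k} => (i : Fin N)))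
    + Real.logb 2 (1 + ∑ i ∈ y (L - 1), ‖hLv i‖ ^ 2)

/-- The approximate network capacity `C̄`: the minimum cut value. -/
noncomputable def approxCap (L N : ℕ) (h0 : Fin N → ℂ)
    (Hm : ℕ → Matrix (Fin N) (Fin N) ℂ) (hLv : Fin N → ℂ) : ℝ :=
  sInf {c : ℝ | ∃ y : ℕ → Finset (Fin N), c = cutValue L N h0 Hm hLv y}

/-- Capacity of the single-path subnetwork choosing relay `i l` in layer `l+1`:
the minimum of the `L+1` link capacities along the path. -/
noncomputable def pathCap (L N : ℕ) (h0 : Fin N → ℂ)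
    (Hm : ℕ → Matrix (Fin N) (Fin N) ℂ) (hLv : Fin N → ℂ)
    (i : ℕ → Fin N) : ℝ :=
  (Finset.range (L + 1)).inf' ⟨0, by simp⟩ (fun t =>
    if t = 0 then Real.logb 2 (1 + ‖h0 (i 0)‖ ^ 2)
    else if t = L then Real.logb 2 (1 + ‖hLv (i (L - 1))‖ ^ 2)
    else Real.logb 2 (1 + ‖Hm t (i t) (i (t - 1))‖ ^ 2))

/-- Maximum of `f` over a finite set, `0` if the set is empty. -/
noncomputable def maxOnR {α : Type*} (s : Finset α) (f : α → ℝ) : ℝ :=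
  if h : s.Nonempty then s.sup' h f else 0

/-- The single-link relaxation of the value of the cut `y`:
`Σ_{l=0}^{L} min(|y_l|,|y_{l+1}ᶜ|) · max_{i ∈ y_l, j ∈ y_{l+1}ᶜ} R⁽ˡ⁾_{ij}`,
with `y₀ = {S}` and `y_{L+1}ᶜ = {D}`, where a term is `0` when the corresponding
index set is empty. -/
noncomputable def tildeCutValue (L N : ℕ) (h0 : Fin N → ℂ)
    (Hm : ℕ → Matrix (Fin N) (Fin N) ℂ) (hLv : Fin N → ℂ)
    (y : ℕ → Finset (Fin N)) : ℝ :=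
  (min 1 ((y 0)ᶜ.card) : ℝ) *
      maxOnR ((y 0)ᶜ) (fun j => Real.logb 2 (1 + ‖h0 j‖ ^ 2))
    + ∑ k ∈ Finset.range (L - 1),
        (min ((y k).card) (((y (k + 1))ᶜ).card) : ℝ) *
          maxOnR ((y k) ×ˢ ((y (k + 1))ᶜ))
            (fun p => Real.logb 2 (1 + ‖Hm (k + 1) p.2 p.1‖ ^ 2))
    + (min ((y (L - 1)).card) 1 : ℝ) *
        maxOnR (y (L - 1)) (fun i => Real.logb 2 (1 + ‖hLv i‖ ^ 2))

/-- `C̃`: the minimum over all cuts of the single-link relaxation of the cut value. -/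
noncomputable def tildeCap (L N : ℕ) (h0 : Fin N → ℂ)
    (Hm : ℕ → Matrix (Fin N) (Fin N) ℂ) (hLv : Fin N → ℂ) : ℝ :=
  sInf {c : ℝ | ∃ y : ℕ → Finset (Fin N), c = tildeCutValue L N h0 Hm hLv y}

/-! ### Auxiliary lemmas -/

private lemma logb_le_of_abs_le {t u : ℝ} (h : |t| ≤ u) (hu : 1 ≤ u) :
    Real.logb 2 t ≤ Real.logb 2 u := by
  rw [← Real.logb_abs 2 t]
  rcases eq_or_lt_of_le (abs_nonneg t) with h0 | h0
  · rw [← h0, Real.logb_zero]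
    exact Real.logb_nonneg one_lt_two hu
  · exact Real.logb_le_logb_of_le one_lt_two h0 h

private lemma mimoCap_col {n : Type*} [Fintype n] [DecidableEq n] (v : n → ℂ) :
    mimoCap (Matrix.of (fun (j : n) (_ : Fin 1) => v j)) =
      Real.logb 2 (1 + ∑ j, ‖v j‖ ^ 2) := by
  unfold mimoCap
  rw [Matrix.det_one_add_mul_comm, Matrix.det_fin_one]
  congr 1
  have hterm : ∀ j : n, (star (v j) * v j).re = ‖v j‖ ^ 2 := by
    intro j
    rw [show star (v j) = (starRingEnd ℂ) (v j) from rfl,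
      ← Complex.normSq_eq_conj_mul_self, Complex.ofReal_re, Complex.sq_norm]
  simp only [Matrix.add_apply, Matrix.one_apply_eq, Matrix.mul_apply,
    Matrix.conjTranspose_apply, Matrix.of_apply, Complex.add_re, Complex.one_re,
    Complex.re_sum, hterm]

private lemma mimoCap_conjT {n m : Type*} [Fintype n] [Fintype m] [DecidableEq n]
    [DecidableEq m] (G : Matrix n m ℂ) :
    mimoCap G.conjTranspose = mimoCap G := by
  unfold mimoCap
  rw [Matrix.conjTranspose_conjTranspose, Matrix.det_one_add_mul_comm]

set_option maxHeartbeats 400000 in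
set_option maxHeartbeats 0 in
private lemma mimoCap_le_aux {n m : Type*} [Fintype n] [Fintype m] [DecidableEq n]
    {N : ℕ} (hN : 1 ≤ N) (hn : Fintype.card n ≤ N) (hm : Fintype.card m ≤ N)
    (G : Matrix n m ℂ) {M : ℝ} (hM : 0 ≤ M)
    (hG : ∀ i j, ‖G i j‖ ^ 2 ≤ M) :
    mimoCap G ≤ (Fintype.card n : ℝ) * Real.logb 2 (1 + M) +
      2 * (N : ℝ) * Real.logb 2 N := by
  have hN' : (1 : ℝ) ≤ N := by exact_mod_cast hN
  set a := Fintype.card n with ha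
  set b := Fintype.card m with hb
  set x : ℝ := 1 + (b : ℝ) * M with hx
  have hx1 : (1 : ℝ) ≤ x := by
    have : 0 ≤ (b : ℝ) * M := mul_nonneg (Nat.cast_nonneg _) hM
    simp only [hx]; linarith
  -- entrywise bound on 1 + G Gᴴ
  set A : Matrix n n ℂ := 1 + G * G.conjTranspose with hA
  have hent : ∀ i j, ‖A i j‖ ≤ x := by
    intro i j
    have hAij : A i j = (1 : Matrix n n ℂ) i j + (G * G.conjTranspose) i j := by
      rw [hA, Matrix.add_apply]
    have h1 : ‖(1 : Matrix n n ℂ) i j‖ ≤ 1 := by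
      by_cases h : i = j <;> simp [Matrix.one_apply, h]
    have h2 : ‖(G * G.conjTranspose) i j‖ ≤ (b : ℝ) * M := by
      rw [Matrix.mul_apply]
      refine le_trans (norm_sum_le _ _) ?_
      have hk : ∀ k : m, ‖G i k * G.conjTranspose k j‖ ≤ M := by
        intro k
        rw [Matrix.conjTranspose_apply, norm_mul,
          show star (G j k) = (starRingEnd ℂ) (G j k) from rfl, Complex.norm_conj]
        have h1' := hG i k
        have h2' := hG j k
        have hik := norm_nonneg (G i k)
        have hjk := norm_nonneg (G j k)
        nlinarith
      calc ∑ k : m, ‖G i k * G.conjTranspose k j‖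
          ≤ ∑ _k : m, M := Finset.sum_le_sum fun k _ => hk k
        _ = (b : ℝ) * M := by rw [Finset.sum_const, Finset.card_univ, nsmul_eq_mul]
    calc ‖A i j‖
        ≤ ‖(1 : Matrix n n ℂ) i j‖ +
            ‖(G * G.conjTranspose) i j‖ := by
          rw [hAij]; exact norm_add_le _ _
      _ ≤ 1 + (b : ℝ) * M := add_le_add h1 h2
  have hdet : ‖Matrix.det A‖ ≤
      (Nat.factorial a : ℝ) * x ^ a := by
    have := Matrix.det_le (abv := IsAbsoluteValue.toAbsoluteValue (norm : ℂ → ℝ)) hent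
    rwa [nsmul_eq_mul] at this
  have hu1 : (1 : ℝ) ≤ (Nat.factorial a : ℝ) * x ^ a := by
    have h1 : (1 : ℝ) ≤ (Nat.factorial a : ℝ) := by
      exact_mod_cast Nat.one_le_iff_ne_zero.mpr (Nat.factorial_ne_zero a)
    have h2 : (1 : ℝ) ≤ x ^ a := by
      simpa using pow_le_pow_left₀ zero_le_one hx1 a
    nlinarith
  have habs : |(Matrix.det A).re| ≤
      (Nat.factorial a : ℝ) * x ^ a :=
    le_trans (Complex.abs_re_le_norm _) hdet
  have step1 : mimoCap G ≤ Real.logb 2 ((Nat.factorial a : ℝ) * x ^ a) := by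
    rw [mimoCap, ← hA]
    exact logb_le_of_abs_le habs hu1
  have hfac_pos : (0 : ℝ) < (Nat.factorial a : ℝ) := by
    exact_mod_cast Nat.factorial_pos a
  have hxpos : (0 : ℝ) < x := lt_of_lt_of_le one_pos hx1
  have step2 : Real.logb 2 ((Nat.factorial a : ℝ) * x ^ a) =
      Real.logb 2 (Nat.factorial a : ℝ) + (a : ℝ) * Real.logb 2 x := by
    rw [Real.logb_mul (ne_of_gt hfac_pos) (ne_of_gt (pow_pos hxpos a)),
      Real.logb_pow]
  have step3 : Real.logb 2 (Nat.factorial a : ℝ) ≤ (N : ℝ) * Real.logb 2 N := by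
    have h1 : (Nat.factorial a : ℝ) ≤ ((N : ℝ)) ^ N := by
      have : Nat.factorial a ≤ N ^ N := by
        calc Nat.factorial a ≤ a ^ a := Nat.factorial_le_pow a
          _ ≤ N ^ a := Nat.pow_le_pow_left hn a
          _ ≤ N ^ N := Nat.pow_le_pow_right hN hn
      exact_mod_cast this
    calc Real.logb 2 (Nat.factorial a : ℝ) ≤ Real.logb 2 ((N : ℝ) ^ N) :=
          Real.logb_le_logb_of_le one_lt_two hfac_pos h1
      _ = (N : ℝ) * Real.logb 2 N := by rw [Real.logb_pow]
  have step4 : Real.logb 2 x ≤ Real.logb 2 N + Real.logb 2 (1 + M) := by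
    have hxle : x ≤ (N : ℝ) * (1 + M) := by
      have hbN : (b : ℝ) ≤ (N : ℝ) := by exact_mod_cast hm
      have : (b : ℝ) * M ≤ (N : ℝ) * M := mul_le_mul_of_nonneg_right hbN hM
      simp only [hx]; nlinarith
    calc Real.logb 2 x ≤ Real.logb 2 ((N : ℝ) * (1 + M)) :=
          Real.logb_le_logb_of_le one_lt_two hxpos hxle
      _ = Real.logb 2 N + Real.logb 2 (1 + M) := by
          rw [Real.logb_mul (by positivity) (by positivity)]
  have hlogN : 0 ≤ Real.logb 2 N := Real.logb_nonneg one_lt_two hN'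
  have haN : (a : ℝ) ≤ (N : ℝ) := by exact_mod_cast hn
  have ha0 : (0 : ℝ) ≤ (a : ℝ) := Nat.cast_nonneg a
  calc mimoCap G ≤ Real.logb 2 (Nat.factorial a : ℝ) + (a : ℝ) * Real.logb 2 x := by
        rw [← step2]; exact step1
    _ ≤ (N : ℝ) * Real.logb 2 N + (a : ℝ) * (Real.logb 2 N + Real.logb 2 (1 + M)) :=
        add_le_add step3 (mul_le_mul_of_nonneg_left step4 ha0)
    _ ≤ (a : ℝ) * Real.logb 2 (1 + M) + 2 * (N : ℝ) * Real.logb 2 N := by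
        have : (a : ℝ) * Real.logb 2 N ≤ (N : ℝ) * Real.logb 2 N :=
          mul_le_mul_of_nonneg_right haN hlogN
        nlinarith
    _ = (Fintype.card n : ℝ) * Real.logb 2 (1 + M) + 2 * (N : ℝ) * Real.logb 2 N := by
        rw [← ha]

private lemma mimoCap_le_min {n m : Type*} [Fintype n] [Fintype m] [DecidableEq n]
    [DecidableEq m] {N : ℕ} (hN : 1 ≤ N) (hn : Fintype.card n ≤ N)
    (hm : Fintype.card m ≤ N) (G : Matrix n m ℂ) {M : ℝ} (hM : 0 ≤ M)
    (hG : ∀ i j, ‖G i j‖ ^ 2 ≤ M) :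
    mimoCap G ≤ min ((Fintype.card n : ℝ)) ((Fintype.card m : ℝ)) * Real.logb 2 (1 + M)
      + 2 * (N : ℝ) * Real.logb 2 N := by
  rcases le_total (Fintype.card n) (Fintype.card m) with h | h
  · have := mimoCap_le_aux hN hn hm G hM hG
    have hmin : min ((Fintype.card n : ℝ)) ((Fintype.card m : ℝ)) = (Fintype.card n : ℝ) :=
      min_eq_left (by exact_mod_cast h)
    rw [hmin]; exact this
  · have hG' : ∀ j i, ‖G.conjTranspose j i‖ ^ 2 ≤ M := by
      intro j i
      rw [Matrix.conjTranspose_apply, show star (G i j) = (starRingEnd ℂ) (G i j) from rfl,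
        Complex.norm_conj]
      exact hG i j
    have := mimoCap_le_aux hN hm hn G.conjTranspose hM hG'
    rw [mimoCap_conjT] at this
    have hmin : min ((Fintype.card n : ℝ)) ((Fintype.card m : ℝ)) = (Fintype.card m : ℝ) :=
      min_eq_right (by exact_mod_cast h)
    rw [hmin]; exact this

private lemma scalar_bound {N : ℕ} (hN : 1 ≤ N) (s : Finset (Fin N)) (v : Fin N → ℂ) :
    Real.logb 2 (1 + ∑ i ∈ s, ‖v i‖ ^ 2) ≤
      min ((s.card : ℝ)) 1 * maxOnR s (fun i => Real.logb 2 (1 + ‖v i‖ ^ 2))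
        + Real.logb 2 N := by
  have hN' : (1 : ℝ) ≤ N := by exact_mod_cast hN
  have hlogN : 0 ≤ Real.logb 2 N := Real.logb_nonneg one_lt_two hN'
  rcases s.eq_empty_or_nonempty with rfl | hs
  · simpa [maxOnR] using hlogN
  · obtain ⟨i₀, hi₀, hMi⟩ := Finset.exists_mem_eq_sup' hs (fun i => ‖v i‖ ^ 2)
    set M : ℝ := ‖v i₀‖ ^ 2 with hMdef
    have hM0 : 0 ≤ M := by positivity
    have hsum : ∑ i ∈ s, ‖v i‖ ^ 2 ≤ (N : ℝ) * M := by
      have h1 : ∑ i ∈ s, ‖v i‖ ^ 2 ≤ ∑ _i ∈ s, M := by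
        refine Finset.sum_le_sum fun i hi => ?_
        have := Finset.le_sup' (fun i => ‖v i‖ ^ 2) hi
        rw [hMi] at this
        exact this
      have h2 : ∑ _i ∈ s, M = (s.card : ℝ) * M := by
        rw [Finset.sum_const, nsmul_eq_mul]
      have h3 : (s.card : ℝ) ≤ (N : ℝ) := by
        exact_mod_cast le_trans (Finset.card_le_univ s) (le_of_eq (Fintype.card_fin N))
      calc ∑ i ∈ s, ‖v i‖ ^ 2 ≤ (s.card : ℝ) * M := h1.trans (le_of_eq h2)
        _ ≤ (N : ℝ) * M := mul_le_mul_of_nonneg_right h3 hM0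
    have hpos : (0 : ℝ) < 1 + ∑ i ∈ s, ‖v i‖ ^ 2 := by
      have : (0:ℝ) ≤ ∑ i ∈ s, ‖v i‖ ^ 2 :=
        Finset.sum_nonneg fun i _ => sq_nonneg _
      linarith
    have hmin : min ((s.card : ℝ)) 1 = 1 := by
      have : (1 : ℝ) ≤ (s.card : ℝ) := by exact_mod_cast Finset.card_pos.mpr hs
      exact min_eq_right this
    have hmax : Real.logb 2 (1 + M) ≤
        maxOnR s (fun i => Real.logb 2 (1 + ‖v i‖ ^ 2)) := by
      rw [maxOnR, dif_pos hs]
      exact Finset.le_sup' (fun i => Real.logb 2 (1 + ‖v i‖ ^ 2)) hi₀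
    calc Real.logb 2 (1 + ∑ i ∈ s, ‖v i‖ ^ 2)
        ≤ Real.logb 2 ((N : ℝ) * (1 + M)) := by
          apply Real.logb_le_logb_of_le one_lt_two hpos
          nlinarith
      _ = Real.logb 2 N + Real.logb 2 (1 + M) := by
          rw [Real.logb_mul (by positivity) (by linarith)]
      _ ≤ min ((s.card : ℝ)) 1 *
            maxOnR s (fun i => Real.logb 2 (1 + ‖v i‖ ^ 2)) +
            Real.logb 2 N := by
          rw [hmin, one_mul]; linarith

/-- The first term of a cut value, as a function of the finset. -/
private noncomputable def fstTerm (N : ℕ) (h0 : Fin N → ℂ) (s : Finset (Fin N)) : ℝ :=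
  mimoCap (Matrix.of (fun (j : {x : Fin N // x ∈ sᶜ}) (_ : Fin 1) => h0 j.1))

/-- A middle term of a cut value, as a function of the finsets. -/
private noncomputable def midTerm (N : ℕ) (H : Matrix (Fin N) (Fin N) ℂ)
    (s t : Finset (Fin N)) : ℝ :=
  mimoCap (H.submatrix (fun j : {x : Fin N // x ∈ tᶜ} => (j : Fin N))
    (fun i : {x : Fin N // x ∈ s} => (i : Fin N)))

private lemma mimoCap_irrel {n m : Type*} (i1 i2 : Fintype n) (j1 j2 : Fintype m)
    (d1 d2 : DecidableEq n) (G : Matrix n m ℂ) :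
    @mimoCap n m i1 j1 d1 G = @mimoCap n m i2 j2 d2 G := by
  cases Subsingleton.elim i1 i2
  cases Subsingleton.elim j1 j2
  cases Subsingleton.elim d1 d2
  rfl

set_option maxHeartbeats 0 in
private lemma cutValue_eq (L N : ℕ) (h0 : Fin N → ℂ)
    (Hm : ℕ → Matrix (Fin N) (Fin N) ℂ) (hLv : Fin N → ℂ) (y : ℕ → Finset (Fin N)) :
    cutValue L N h0 Hm hLv y =
      fstTerm N h0 (y 0)
        + ∑ k ∈ Finset.range (L - 1), midTerm N (Hm (k + 1)) (y k) (y (k + 1))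
        + Real.logb 2 (1 + ∑ i ∈ y (L - 1), ‖hLv i‖ ^ 2) := by
  unfold cutValue fstTerm midTerm
  congr 1
  congr 1
  exact Finset.sum_congr rfl fun k _ => mimoCap_irrel _ _ _ _ _ _ _

private lemma cutValue_congr {L N : ℕ} (hL : 1 ≤ L) (h0 : Fin N → ℂ)
    (Hm : ℕ → Matrix (Fin N) (Fin N) ℂ) (hLv : Fin N → ℂ)
    {y z : ℕ → Finset (Fin N)} (h : ∀ n, n < L → y n = z n) :
    cutValue L N h0 Hm hLv y = cutValue L N h0 Hm hLv z := by
  rw [cutValue_eq, cutValue_eq, h 0 (by omega), h (L - 1) (by omega)]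
  congr 1
  congr 1
  refine Finset.sum_congr rfl fun k hk => ?_
  rw [Finset.mem_range] at hk
  rw [h k (by omega), h (k + 1) (by omega)]

set_option maxHeartbeats 0 in
private lemma fstTerm_le {N : ℕ} (hN : 1 ≤ N) (h0 : Fin N → ℂ) (s : Finset (Fin N)) :
    fstTerm N h0 s ≤
      min 1 ((sᶜ.card : ℝ)) *
          maxOnR sᶜ (fun j => Real.logb 2 (1 + ‖h0 j‖ ^ 2))
        + Real.logb 2 N := by
  have h1 : fstTerm N h0 s = Real.logb 2 (1 + ∑ j ∈ sᶜ, ‖h0 j‖ ^ 2) := by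
    rw [fstTerm, mimoCap_col]
    congr 1
    rw [Finset.sum_coe_sort sᶜ (fun j => ‖h0 j‖ ^ 2)]
  rw [h1, min_comm]
  exact scalar_bound hN sᶜ h0

set_option maxHeartbeats 0 in
private lemma midTerm_le {N : ℕ} (hN : 1 ≤ N) (H : Matrix (Fin N) (Fin N) ℂ)
    (s t : Finset (Fin N)) :
    midTerm N H s t ≤
      min ((s.card : ℝ)) ((tᶜ.card : ℝ)) *
          maxOnR (s ×ˢ tᶜ) (fun p => Real.logb 2 (1 + ‖H p.2 p.1‖ ^ 2))
        + 2 * (N : ℝ) * Real.logb 2 N := by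
  have hcn : Fintype.card {x : Fin N // x ∈ tᶜ} = tᶜ.card := Fintype.card_coe _
  have hcm : Fintype.card {x : Fin N // x ∈ s} = s.card := Fintype.card_coe _
  have hnN : Fintype.card {x : Fin N // x ∈ tᶜ} ≤ N := by
    rw [hcn]; exact le_trans (Finset.card_le_univ _) (le_of_eq (Fintype.card_fin N))
  have hmN : Fintype.card {x : Fin N // x ∈ s} ≤ N := by
    rw [hcm]; exact le_trans (Finset.card_le_univ _) (le_of_eq (Fintype.card_fin N))
  rcases (s ×ˢ tᶜ).eq_empty_or_nonempty with he | hne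
  · have h0 : s = ∅ ∨ tᶜ = ∅ := by
      by_contra hc
      push_neg at hc
      obtain ⟨ha, hb⟩ := hc
      have := Finset.nonempty_product.mpr
        ⟨ha, hb⟩
      rw [he] at this
      exact Finset.not_nonempty_empty this
    have hmin0 : min ((s.card : ℝ)) ((tᶜ.card : ℝ)) = 0 := by
      rcases h0 with h | h <;> simp [h]
    have hG0 : ∀ (i : {x : Fin N // x ∈ tᶜ}) (j : {x : Fin N // x ∈ s}),
        ‖(H.submatrix (fun j : {x : Fin N // x ∈ tᶜ} => (j : Fin N))
          (fun i : {x : Fin N // x ∈ s} => (i : Fin N))) i j‖ ^ 2 ≤ 0 := by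
      intro i j
      rcases h0 with h | h
      · exact absurd j.2 (by simp [h])
      · exact absurd i.2 (by simp [h])
    have hb := mimoCap_le_min hN hnN hmN _ le_rfl hG0
    rw [midTerm]
    rw [hmin0, zero_mul, zero_add]
    calc _ ≤ min ((Fintype.card {x : Fin N // x ∈ tᶜ} : ℝ))
          ((Fintype.card {x : Fin N // x ∈ s} : ℝ)) * Real.logb 2 (1 + 0)
          + 2 * (N : ℝ) * Real.logb 2 N := hb
      _ = 2 * (N : ℝ) * Real.logb 2 N := by norm_num
  · obtain ⟨p₀, hp₀, hMi⟩ :=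
      Finset.exists_mem_eq_sup' hne (fun p => ‖H p.2 p.1‖ ^ 2)
    set M : ℝ := ‖H p₀.2 p₀.1‖ ^ 2 with hMdef
    have hM0 : 0 ≤ M := by positivity
    have hG : ∀ (i : {x : Fin N // x ∈ tᶜ}) (j : {x : Fin N // x ∈ s}),
        ‖(H.submatrix (fun j : {x : Fin N // x ∈ tᶜ} => (j : Fin N))
          (fun i : {x : Fin N // x ∈ s} => (i : Fin N))) i j‖ ^ 2 ≤ M := by
      intro i j
      have hmem : ((j : Fin N), (i : Fin N)) ∈ s ×ˢ tᶜ :=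
        Finset.mem_product.mpr ⟨j.2, i.2⟩
      have := Finset.le_sup' (fun p => ‖H p.2 p.1‖ ^ 2) hmem
      rw [hMi] at this
      exact this
    have hb := mimoCap_le_min hN hnN hmN _ hM0 hG
    have hmax : Real.logb 2 (1 + M) ≤
        maxOnR (s ×ˢ tᶜ) (fun p => Real.logb 2 (1 + ‖H p.2 p.1‖ ^ 2)) := by
      rw [maxOnR, dif_pos hne]
      exact Finset.le_sup' (fun p => Real.logb 2 (1 + ‖H p.2 p.1‖ ^ 2)) hp₀
    have hminnn : (0 : ℝ) ≤ min ((s.card : ℝ)) ((tᶜ.card : ℝ)) :=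
      le_min (Nat.cast_nonneg _) (Nat.cast_nonneg _)
    have hrw : min ((Fintype.card {x : Fin N // x ∈ tᶜ} : ℝ))
        ((Fintype.card {x : Fin N // x ∈ s} : ℝ)) = min ((s.card : ℝ)) ((tᶜ.card : ℝ)) := by
      rw [hcn, hcm, min_comm]
    rw [midTerm]
    calc _ ≤ min ((Fintype.card {x : Fin N // x ∈ tᶜ} : ℝ))
          ((Fintype.card {x : Fin N // x ∈ s} : ℝ)) * Real.logb 2 (1 + M)
          + 2 * (N : ℝ) * Real.logb 2 N := hb
      _ = min ((s.card : ℝ)) ((tᶜ.card : ℝ)) * Real.logb 2 (1 + M)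
          + 2 * (N : ℝ) * Real.logb 2 N := by rw [hrw]
      _ ≤ min ((s.card : ℝ)) ((tᶜ.card : ℝ)) *
            maxOnR (s ×ˢ tᶜ) (fun p => Real.logb 2 (1 + ‖H p.2 p.1‖ ^ 2))
          + 2 * (N : ℝ) * Real.logb 2 N := by
          have := mul_le_mul_of_nonneg_left hmax hminnn
          linarith

set_option maxHeartbeats 0 in
private lemma cut_le_tilde {L N : ℕ} (hL : 1 ≤ L) (hN : 1 ≤ N) (h0 : Fin N → ℂ)
    (Hm : ℕ → Matrix (Fin N) (Fin N) ℂ) (hLv : Fin N → ℂ) (y : ℕ → Finset (Fin N)) :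
    cutValue L N h0 Hm hLv y ≤ tildeCutValue L N h0 Hm hLv y
      + (2 + 2 * (N : ℝ) * ((L : ℝ) - 1)) * Real.logb 2 N := by
  rw [cutValue_eq]
  have t0 := fstTerm_le hN h0 (y 0)
  have tL := scalar_bound hN (y (L - 1)) hLv
  have hsum : ∑ k ∈ Finset.range (L - 1), midTerm N (Hm (k + 1)) (y k) (y (k + 1)) ≤
      (∑ k ∈ Finset.range (L - 1),
        (min ((y k).card) (((y (k + 1))ᶜ).card) : ℝ) *
          maxOnR ((y k) ×ˢ ((y (k + 1))ᶜ))
            (fun p => Real.logb 2 (1 + ‖Hm (k + 1) p.2 p.1‖ ^ 2)))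
      + ((L - 1 : ℕ) : ℝ) * (2 * (N : ℝ) * Real.logb 2 N) := by
    calc ∑ k ∈ Finset.range (L - 1), midTerm N (Hm (k + 1)) (y k) (y (k + 1))
        ≤ ∑ k ∈ Finset.range (L - 1),
            ((min ((y k).card) (((y (k + 1))ᶜ).card) : ℝ) *
              maxOnR ((y k) ×ˢ ((y (k + 1))ᶜ))
                (fun p => Real.logb 2 (1 + ‖Hm (k + 1) p.2 p.1‖ ^ 2))
              + 2 * (N : ℝ) * Real.logb 2 N) :=
          Finset.sum_le_sum fun k _ => midTerm_le hN (Hm (k + 1)) (y k) (y (k + 1))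
      _ = _ := by
          rw [Finset.sum_add_distrib, Finset.sum_const, Finset.card_range, nsmul_eq_mul]
  have hcast : ((L - 1 : ℕ) : ℝ) = (L : ℝ) - 1 := by
    rw [Nat.cast_sub hL]; norm_num
  rw [hcast] at hsum
  have hc : Real.logb 2 N + Real.logb 2 N
      + ((L : ℝ) - 1) * (2 * (N : ℝ) * Real.logb 2 N)
      = (2 + 2 * (N : ℝ) * ((L : ℝ) - 1)) * Real.logb 2 N := by ring
  rw [tildeCutValue]
  linarith

set_option maxHeartbeats 0 in
private lemma cutSet_finite (L N : ℕ) (hL : 1 ≤ L) (h0 : Fin N → ℂ)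
    (Hm : ℕ → Matrix (Fin N) (Fin N) ℂ) (hLv : Fin N → ℂ) :
    {c : ℝ | ∃ y : ℕ → Finset (Fin N), c = cutValue L N h0 Hm hLv y}.Finite := by
  apply Set.Finite.subset (Set.finite_range (fun z : Fin L → Finset (Fin N) =>
    cutValue L N h0 Hm hLv (fun n => if h : n < L then z ⟨n, h⟩ else ∅)))
  rintro c ⟨y, rfl⟩
  have e : cutValue L N h0 Hm hLv y =
      cutValue L N h0 Hm hLv
        (fun n => if h : n < L then (fun i : Fin L => y i.1) ⟨n, h⟩ else ∅) :=
    cutValue_congr hL h0 Hm hLv (fun n hn => by simp [dif_pos hn])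
  rw [e]
  exact Set.mem_range_self (fun i : Fin L => y i.1)

set_option maxHeartbeats 0 in
/-- For every layered Gaussian relay network with `L` relay layers and `N` relays per
layer, `C̄ ≤ C̃ + (2 + 2N(L−1))·log₂ N`. -/
theorem approxCap_le_tildeCap (L N : ℕ) (hL : 1 ≤ L) (hN : 1 ≤ N)
    (h0 : Fin N → ℂ) (Hm : ℕ → Matrix (Fin N) (Fin N) ℂ) (hLv : Fin N → ℂ) :
    approxCap L N h0 Hm hLv ≤
      tildeCap L N h0 Hm hLv
        + (2 + 2 * (N : ℝ) * ((L : ℝ) - 1)) * Real.logb 2 N := by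
  have hbdd := (cutSet_finite L N hL h0 Hm hLv).bddBelow
  have h1 : ∀ y, approxCap L N h0 Hm hLv ≤ cutValue L N h0 Hm hLv y :=
    fun y => csInf_le hbdd ⟨y, rfl⟩
  have h2 : approxCap L N h0 Hm hLv
      - (2 + 2 * (N : ℝ) * ((L : ℝ) - 1)) * Real.logb 2 N ≤ tildeCap L N h0 Hm hLv := by
    refine le_csInf ⟨tildeCutValue L N h0 Hm hLv (fun _ => ∅), ⟨fun _ => ∅, rfl⟩⟩ ?_
    rintro c ⟨y, rfl⟩
    have := (h1 y).trans (cut_le_tilde hL hN h0 Hm hLv y)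
    linarith
  linarith
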